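/- (Birman–Schwinger principle, abstract form) Let H₀ be a nonnegative self-adjoint operator on a Hilbert space and W a bounded self-adjoint operator such that W² is relatively bounded with respect to H₀. For μ > 0, the number −μ is an eigenvalue of H₀ − W² if and only if 1 is an eigenvalue of the bounded operator K_μ := W(H₀ + μ)^{-1}W. -/
import Mathlib


open scoped InnerProductSpace

/-- **Birman–Schwinger principle** (abstract form). `T` is a nonnegative symmetric
(self-adjoint) operator defined on a domain `D` in a Hilbert space, `W` is a bounded
self-adjoint operator such that `W²` is relatively bounded with respect to `T`, and
for `μ > 0`, `R` is the resolvent `(T + μ)⁻¹`.  Then `-μ` is an eigenvalue of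
`T - W²` if and only if `1` is an eigenvalue of the bounded Birman–Schwinger
operator `K_μ = W (T + μ)⁻¹ W`. -/
theorem birman_schwinger_principle
    {H : Type*} [NormedAddCommGroup H] [InnerProductSpace ℝ H] [CompleteSpace H]
    (D : Submodule ℝ H) (T : D →ₗ[ℝ] H)
    (hsym : ∀ x y : D, ⟪T x, (y : H)⟫_ℝ = ⟪(x : H), T y⟫_ℝ)
    (hnonneg : ∀ x : D, 0 ≤ ⟪T x, (x : H)⟫_ℝ)
    (W : H →L[ℝ] H) (hW : IsSelfAdjoint W)
    (hrel : ∃ a b : ℝ, 0 ≤ a ∧ 0 ≤ b ∧ ∀ x : D, ‖W (W (x : H))‖ ≤ a * ‖(x : H)‖ + b * ‖T x‖)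
    (μ : ℝ) (hμ : 0 < μ)
    (R : H →L[ℝ] H)
    (hR : ∀ y : H, ∃ x : D, (x : H) = R y ∧ T x + μ • (x : H) = y) :
    (∃ f : D, (f : H) ≠ 0 ∧ T f - W (W (f : H)) = (-μ) • (f : H)) ↔
    (∃ g : H, g ≠ 0 ∧ W (R (W g)) = g) := by
  -- injectivity of T + μ
  have hker : ∀ z : D, T z + μ • (z : H) = 0 → (z : H) = 0 := by
    intro z hz
    have h0 : ⟪T z + μ • (z : H), (z : H)⟫_ℝ = 0 := by rw [hz, inner_zero_left]
    rw [inner_add_left, real_inner_smul_left, real_inner_self_eq_norm_sq] at h0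
    have h1 := hnonneg z
    have h2 : 0 ≤ μ * ‖(z : H)‖ ^ 2 := by positivity
    have hn : ‖(z : H)‖ ^ 2 = 0 := by nlinarith
    have : ‖(z : H)‖ = 0 := by nlinarith [norm_nonneg (z : H)]
    exact norm_eq_zero.mp this
  have hinj : ∀ x y : D, T x + μ • (x : H) = T y + μ • (y : H) → (x : H) = (y : H) := by
    intro x y hxy
    have hz : T (x - y) + μ • ((x - y : D) : H) = 0 := by
      have : ((x - y : D) : H) = (x : H) - (y : H) := rfl
      rw [map_sub, this, smul_sub]
      rw [show T x - T y + (μ • (x : H) - μ • (y : H)) =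
        (T x + μ • (x : H)) - (T y + μ • (y : H)) by abel, hxy, sub_self]
    have := hker _ hz
    have h : (x : H) - (y : H) = 0 := this
    exact sub_eq_zero.mp h
  constructor
  · rintro ⟨f, hf0, hf⟩
    obtain ⟨x, hx1, hx2⟩ := hR (W (W (f : H)))
    have hf' : T f + μ • (f : H) = W (W (f : H)) := by
      have := hf
      rw [sub_eq_iff_eq_add] at this
      rw [this]
      rw [neg_smul]
      abel
    have hxf : (x : H) = (f : H) := hinj x f (by rw [hx2, hf'])
    refine ⟨W (f : H), ?_, ?_⟩
    · intro hWf
      apply hf0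
      apply hker f
      rw [hf', hWf, map_zero]
    · rw [← hx1, hxf]
  · rintro ⟨g, hg0, hg⟩
    obtain ⟨x, hx1, hx2⟩ := hR (W g)
    have hWx : W (x : H) = g := by rw [hx1]; exact hg
    refine ⟨x, ?_, ?_⟩
    · intro h0
      apply hg0
      rw [← hWx, h0, map_zero]
    · rw [hWx, ← hx2, neg_smul]
      abel
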